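/- arXiv:2504.01777 — 3 statements merged into one kernel-verified Lean document; each statement's English description precedes it below -/
import Mathlib

section
/- The Adler–Moser polynomial Θ_N(z), defined as c_N times the N×N determinant with (i,j) entry θ_{2i-j}(z), is a monic polynomial in z of degree N(N+1)/2. -/
open Polynomial Finset

noncomputable def expPS {R : Type} [CommRing R] [Algebra ℚ R] (f : PowerSeries R) :
    PowerSeries R :=
  PowerSeries.mk fun j => ∑ n ∈ Finset.range (j + 1),
    (Nat.factorial n : ℚ)⁻¹ • PowerSeries.coeff (R := R) j (f ^ n)

/-- The polynomials `θ_j(z)` defined by `∑_{j≥0} θ_j(z) ε^j = exp(z ε + ∑_{i≥1} κ_i ε^{2i+1})`. -/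
noncomputable def theta (κ : ℕ → ℂ) (j : ℕ) : Polynomial ℂ :=
  PowerSeries.coeff (R := Polynomial ℂ) j (expPS (PowerSeries.mk fun i =>
    if i = 1 then Polynomial.X
    else if Odd i ∧ 3 ≤ i then Polynomial.C (κ ((i - 1) / 2)) else 0))

noncomputable def gk (κ : ℕ → ℂ) (i : ℕ) : Polynomial ℂ :=
  if i = 1 then Polynomial.X
  else if Odd i ∧ 3 ≤ i then Polynomial.C (κ ((i - 1) / 2)) else 0

lemma theta_eq (κ : ℕ → ℂ) (j : ℕ) :
    theta κ j = ∑ n ∈ Finset.range (j + 1),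
      (Nat.factorial n : ℚ)⁻¹ • PowerSeries.coeff (R := Polynomial ℂ) j ((PowerSeries.mk (gk κ)) ^ n) := by
  rw [theta, expPS, PowerSeries.coeff_mk]
  rfl

lemma gk_natDegree_le (κ : ℕ → ℂ) (i : ℕ) : (gk κ i).natDegree ≤ i := by
  unfold gk
  split_ifs with h1 h2
  · simp [h1]
  · simp
  · simp

lemma gk_coeff (κ : ℕ → ℂ) (i : ℕ) : (gk κ i).coeff i = if i = 1 then 1 else 0 := by
  unfold gk
  split_ifs with h1 h2
  · simp [h1]
  · rw [Polynomial.coeff_C, if_neg (by omega)]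
  · simp

lemma pow_natDegree_le (κ : ℕ → ℂ) (n j : ℕ) :
    (PowerSeries.coeff (R := Polynomial ℂ) j ((PowerSeries.mk (gk κ)) ^ n)).natDegree ≤ j := by
  induction n generalizing j with
  | zero => rw [pow_zero, PowerSeries.coeff_one]; split_ifs <;> simp
  | succ n ih =>
    rw [pow_succ, PowerSeries.coeff_mul]
    refine Polynomial.natDegree_sum_le_of_forall_le _ _ fun p hp => ?_
    have hmem := Finset.HasAntidiagonal.mem_antidiagonal.mp hp
    refine (Polynomial.natDegree_mul_le).trans ?_
    rw [PowerSeries.coeff_mk]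
    calc _ ≤ p.1 + p.2 := add_le_add (ih p.1) (gk_natDegree_le κ p.2)
    _ = j := hmem

lemma pow_coeff (κ : ℕ → ℂ) (n j : ℕ) :
    (PowerSeries.coeff (R := Polynomial ℂ) j ((PowerSeries.mk (gk κ)) ^ n)).coeff j
      = if n = j then 1 else 0 := by
  induction n generalizing j with
  | zero =>
    rw [pow_zero, PowerSeries.coeff_one]
    by_cases h : j = 0 <;> simp [h, eq_comm]
  | succ n ih =>
    rw [pow_succ, PowerSeries.coeff_mul, Polynomial.finset_sum_coeff]
    have key : ∀ p ∈ Finset.HasAntidiagonal.antidiagonal j,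
        ((PowerSeries.coeff (R := Polynomial ℂ) p.1 ((PowerSeries.mk (gk κ)) ^ n) *
          PowerSeries.coeff (R := Polynomial ℂ) p.2 (PowerSeries.mk (gk κ)))).coeff j
        = if p = (n, 1) then 1 else 0 := by
      intro p hp
      have hmem := Finset.HasAntidiagonal.mem_antidiagonal.mp hp
      rw [PowerSeries.coeff_mk, ← hmem,
        Polynomial.coeff_mul_add_eq_of_natDegree_le (pow_natDegree_le κ n p.1) (gk_natDegree_le κ p.2),
        ih p.1, gk_coeff]
      rcases p with ⟨a, b⟩
      by_cases h1 : n = a <;> by_cases h2 : b = 1 <;>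
        simp [h1, h2, Prod.ext_iff, eq_comm]
    rw [Finset.sum_congr rfl key, Finset.sum_ite_eq' (Finset.HasAntidiagonal.antidiagonal j) (n, 1) (fun _ => 1)]
    simp [Finset.HasAntidiagonal.mem_antidiagonal]

lemma qsmul_eq (q : ℚ) (p : Polynomial ℂ) : q • p = Polynomial.C (q : ℂ) * p := by
  rw [← Polynomial.smul_eq_C_mul, ← algebraMap_smul ℂ q p, eq_ratCast (algebraMap ℚ ℂ) q]

lemma theta_natDegree_le (κ : ℕ → ℂ) (j : ℕ) : (theta κ j).natDegree ≤ j := by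
  rw [theta_eq]
  refine Polynomial.natDegree_sum_le_of_forall_le (Finset.range (j+1)) _ fun n _ => ?_
  rw [qsmul_eq]
  exact le_trans (Polynomial.natDegree_C_mul_le _ _) (pow_natDegree_le κ n j)

lemma theta_coeff_self (κ : ℕ → ℂ) (j : ℕ) : (theta κ j).coeff j = ((j.factorial : ℂ))⁻¹ := by
  rw [theta_eq, Polynomial.finset_sum_coeff]
  have : ∀ n ∈ Finset.range (j + 1),
      ((Nat.factorial n : ℚ)⁻¹ • PowerSeries.coeff (R := Polynomial ℂ) j
        ((PowerSeries.mk (gk κ)) ^ n)).coeff j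
      = if n = j then ((Nat.factorial n : ℚ)⁻¹ • (1 : ℂ)) else 0 := by
    intro n _
    rw [Polynomial.coeff_smul, pow_coeff]
    split_ifs <;> simp
  rw [Finset.sum_congr rfl this, Finset.sum_ite_eq' (Finset.range (j+1)) j]
  rw [if_pos (Finset.self_mem_range_succ j)]
  rw [Rat.smul_one_eq_cast]
  push_cast
  ring

/-- `c_N = ∏_{j=1}^N (2j-1)!!`. -/
def cN (N : ℕ) : ℕ := ∏ j ∈ Finset.range N, Nat.doubleFactorial (2 * j + 1)

/-- The Adler--Moser polynomial `Θ_N(z) = c_N · det_{1≤i,j≤N}(θ_{2i-j}(z))`,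
with the convention `θ_m ≡ 0` for `m < 0` (in 0-based indices the entry is
`θ_{2i+1-j}` when `j ≤ 2i+1`, and `0` otherwise). -/
noncomputable def adlerMoser (κ : ℕ → ℂ) (N : ℕ) : Polynomial ℂ :=
  (cN N : Polynomial ℂ) * Matrix.det (Matrix.of fun i j : Fin N =>
    if (j : ℕ) ≤ 2 * (i : ℕ) + 1 then theta κ (2 * (i : ℕ) + 1 - (j : ℕ)) else 0)


section Det

variable (κ : ℕ → ℂ) (N : ℕ)

noncomputable def Mmat : Matrix (Fin N) (Fin N) (Polynomial ℂ) :=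
  Matrix.of fun i j : Fin N =>
    if (j : ℕ) ≤ 2 * (i : ℕ) + 1 then theta κ (2 * (i : ℕ) + 1 - (j : ℕ)) else 0

noncomputable def Lmat : Matrix (Fin N) (Fin N) ℂ :=
  Matrix.of fun i j : Fin N =>
    if (j : ℕ) ≤ 2 * (i : ℕ) + 1 then (((2 * (i : ℕ) + 1 - (j : ℕ)).factorial : ℂ))⁻¹ else 0

lemma entry_natDegree (i j : Fin N) :
    (Mmat κ N i j).natDegree ≤ 2 * (i : ℕ) + 1 - (j : ℕ) := by
  rw [Mmat, Matrix.of_apply]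
  split_ifs
  · exact theta_natDegree_le _ _
  · simp

lemma entry_coeff (i j : Fin N) :
    (Mmat κ N i j).coeff (2 * (i : ℕ) + 1 - (j : ℕ)) = Lmat N i j := by
  rw [Mmat, Lmat, Matrix.of_apply, Matrix.of_apply]
  split_ifs
  · exact theta_coeff_self _ _
  · simp

lemma sum_d (σ : Equiv.Perm (Fin N)) (h : ∀ i : Fin N, (i : ℕ) ≤ 2 * ((σ i : Fin N) : ℕ) + 1) :
    ∑ i : Fin N, (2 * ((σ i : Fin N) : ℕ) + 1 - (i : ℕ)) = N * (N + 1) / 2 := by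
  have hsub : ∑ i : Fin N, (2 * ((σ i : Fin N) : ℕ) + 1 - (i : ℕ))
      = (∑ i : Fin N, (2 * ((σ i : Fin N) : ℕ) + 1)) - ∑ i : Fin N, (i : ℕ) :=
    Finset.sum_tsub_distrib Finset.univ (fun i _ => h i)
  have hcomp : ∑ i : Fin N, ((σ i : Fin N) : ℕ) = ∑ i : Fin N, (i : ℕ) :=
    Equiv.sum_comp σ fun i => (i : ℕ)
  have hT : (∑ i : Fin N, (i : ℕ)) * 2 = N * (N - 1) := by
    rw [Fin.sum_univ_eq_sum_range (fun i => i) N]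
    exact Finset.sum_range_id_mul_two N
  have hsum1 : ∑ i : Fin N, (2 * ((σ i : Fin N) : ℕ) + 1)
      = 2 * (∑ i : Fin N, (i : ℕ)) + N := by
    rw [Finset.sum_add_distrib, ← Finset.mul_sum, hcomp]
    simp
  rw [hsub, hsum1]
  have h3 : N * (N + 1) = (∑ i : Fin N, (i : ℕ)) * 2 + 2 * N := by
    rw [hT]
    cases N with
    | zero => rfl
    | succ n => simp [Nat.succ_sub_one]; ring
  rw [h3]
  omega

lemma coeff_prod_of_natDegree_le' {ι : Type*} (s : Finset ι)
    (f : ι → Polynomial ℂ) (d : ι → ℕ) (h : ∀ i ∈ s, (f i).natDegree ≤ d i) :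
    (∏ i ∈ s, f i).coeff (∑ i ∈ s, d i) = ∏ i ∈ s, (f i).coeff (d i) := by
  induction s using Finset.cons_induction with
  | empty => simp
  | cons a s ha ih =>
    rw [Finset.prod_cons, Finset.sum_cons,
      Polynomial.coeff_mul_add_eq_of_natDegree_le (h a (Finset.mem_cons_self a s))
        ((Polynomial.natDegree_prod_le s f).trans
          (Finset.sum_le_sum fun i hi => h i (Finset.mem_cons_of_mem hi))),
      ih fun i hi => h i (Finset.mem_cons_of_mem hi), Finset.prod_cons]

lemma natDegree_zsmul_le (n : ℤ) (p : Polynomial ℂ) : (n • p).natDegree ≤ p.natDegree := by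
  rw [zsmul_eq_mul]
  refine le_trans (Polynomial.natDegree_mul_le) ?_
  simp [Polynomial.natDegree_intCast]

lemma detM_natDegree_le : (Mmat κ N).det.natDegree ≤ N * (N + 1) / 2 := by
  rw [Matrix.det_apply]
  refine Polynomial.natDegree_sum_le_of_forall_le _ _ fun σ _ => ?_
  rw [Units.smul_def]
  refine le_trans (natDegree_zsmul_le _ _) ?_
  by_cases h : ∀ i : Fin N, (i : ℕ) ≤ 2 * ((σ i : Fin N) : ℕ) + 1
  · refine le_trans (Polynomial.natDegree_prod_le _ _) ?_
    rw [← sum_d N σ h]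
    exact Finset.sum_le_sum fun i _ => entry_natDegree κ N (σ i) i
  · push_neg at h
    obtain ⟨i, hi⟩ := h
    rw [Finset.prod_eq_zero (Finset.mem_univ i)]
    · simp
    · rw [Mmat, Matrix.of_apply, if_neg (by omega)]

lemma detM_coeff : (Mmat κ N).det.coeff (N * (N + 1) / 2) = (Lmat N).det := by
  rw [Matrix.det_apply, Matrix.det_apply, Polynomial.finset_sum_coeff]
  refine Finset.sum_congr rfl fun σ _ => ?_
  rw [Units.smul_def, Units.smul_def, Polynomial.coeff_smul]
  congr 1
  by_cases h : ∀ i : Fin N, (i : ℕ) ≤ 2 * ((σ i : Fin N) : ℕ) + 1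
  · rw [← sum_d N σ h,
      coeff_prod_of_natDegree_le' Finset.univ _ _ fun i _ => entry_natDegree κ N (σ i) i]
    exact Finset.prod_congr rfl fun i _ => entry_coeff κ N (σ i) i
  · push_neg at h
    obtain ⟨i, hi⟩ := h
    rw [Finset.prod_eq_zero (Finset.mem_univ i) (by rw [Mmat, Matrix.of_apply, if_neg (by omega)]),
      Finset.prod_eq_zero (Finset.mem_univ i) (by rw [Lmat, Matrix.of_apply, if_neg (by omega)])]
    simp

end Det

section Det2

variable (N : ℕ)

lemma prod_Ioi_swap {M : Type*} [CommMonoid M] (f : Fin N → Fin N → M) :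
    ∏ i : Fin N, ∏ j ∈ Ioi i, f i j = ∏ j : Fin N, ∏ i ∈ Iio j, f i j := by
  rw [Finset.prod_sigma', Finset.prod_sigma']
  refine Finset.prod_nbij' (fun p => ⟨p.2, p.1⟩) (fun p => ⟨p.2, p.1⟩) ?_ ?_ ?_ ?_ ?_ <;> simp

lemma prod_range_sub_self (n : ℕ) : ∏ i ∈ Finset.range n, (n - i) = n.factorial := by
  have h := Finset.prod_range_reflect (fun k => k + 1) n
  rw [Finset.prod_range_add_one_eq_factorial] at h
  rw [← h]
  refine Finset.prod_congr rfl fun i hi => ?_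
  have := Finset.mem_range.mp hi
  omega

lemma inner_prod (n : ℕ) : ∏ i ∈ Finset.range n, 2 * (n - i) = 2 ^ n * n.factorial := by
  rw [Finset.prod_mul_distrib, Finset.prod_const, Finset.card_range, prod_range_sub_self]

noncomputable def Pn : ℕ := ∏ i : Fin N, ∏ j ∈ Ioi i, 2 * ((j : ℕ) - (i : ℕ))

lemma Pn_eq : Pn N = ∏ j ∈ Finset.range N, 2 ^ j * j.factorial := by
  rw [Pn, prod_Ioi_swap]
  rw [← Fin.prod_univ_eq_prod_range (fun j => 2 ^ j * j.factorial) N]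
  refine Finset.prod_congr rfl fun j _ => ?_
  have hmap : ∏ i ∈ Iio j, 2 * ((j : ℕ) - (i : ℕ))
      = ∏ i ∈ Finset.Iio (j : ℕ), 2 * ((j : ℕ) - i) := by
    rw [← Fin.map_valEmbedding_Iio, Finset.prod_map]
    rfl
  rw [hmap, Nat.Iio_eq_range, inner_prod]

lemma cN_mul_Pn : cN N * Pn N = ∏ i ∈ Finset.range N, (2 * i + 1).factorial := by
  rw [cN, Pn_eq, ← Finset.prod_mul_distrib]
  refine Finset.prod_congr rfl fun j _ => ?_
  rw [← Nat.doubleFactorial_two_mul j, ← Nat.factorial_eq_mul_doubleFactorial (2 * j)]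

lemma Lmat_entry (i j : Fin N) :
    Lmat N i j = (((2 * (i : ℕ) + 1).factorial : ℂ))⁻¹
      * (((2 * (i : ℕ) + 1).descFactorial (j : ℕ) : ℕ) : ℂ) := by
  rw [Lmat, Matrix.of_apply]
  split_ifs with h
  · have hfac := Nat.factorial_mul_descFactorial h
    have h1 : (((2 * (i : ℕ) + 1 - (j : ℕ)).factorial : ℂ)) ≠ 0 :=
      Nat.cast_ne_zero.mpr (Nat.factorial_pos _).ne'
    have h2 : (((2 * (i : ℕ) + 1).factorial : ℂ)) ≠ 0 :=
      Nat.cast_ne_zero.mpr (Nat.factorial_pos _).ne'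
    have hc : (((2 * (i : ℕ) + 1 - (j : ℕ)).factorial : ℂ))
        * (((2 * (i : ℕ) + 1).descFactorial (j : ℕ) : ℕ) : ℂ)
        = (((2 * (i : ℕ) + 1).factorial : ℂ)) := by
      exact_mod_cast congrArg (Nat.cast : ℕ → ℂ) hfac
    field_simp
    linear_combination -hc
  · rw [Nat.descFactorial_eq_zero_iff_lt.mpr (by omega)]
    simp

lemma detL : (cN N : ℂ) * (Lmat N).det = 1 := by
  have hW : (Lmat N).det
      = (∏ i : Fin N, (((2 * (i : ℕ) + 1).factorial : ℂ))⁻¹)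
        * (Matrix.of fun i j : Fin N =>
            (descPochhammer ℂ (j : ℕ)).eval (((2 * (i : ℕ) + 1 : ℕ) : ℂ))).det := by
    rw [show Lmat N = Matrix.of fun i j : Fin N =>
        (((2 * (i : ℕ) + 1).factorial : ℂ))⁻¹
          * (descPochhammer ℂ (j : ℕ)).eval (((2 * (i : ℕ) + 1 : ℕ) : ℂ)) from ?_]
    · exact Matrix.det_mul_column _ _
    · ext i j
      simp only [Matrix.of_apply, descPochhammer_eval_eq_descFactorial]
      rw [Lmat_entry]
  have hV : (Matrix.of fun i j : Fin N =>
      (descPochhammer ℂ (j : ℕ)).eval (((2 * (i : ℕ) + 1 : ℕ) : ℂ))).det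
      = ((Pn N : ℕ) : ℂ) := by
    rw [← Matrix.det_eval_matrixOfPolynomials_eq_det_vandermonde
        (fun i : Fin N => ((2 * (i : ℕ) + 1 : ℕ) : ℂ)) (fun j => descPochhammer ℂ (j : ℕ))
        (fun j => descPochhammer_natDegree ℂ (j : ℕ)) (fun j => monic_descPochhammer ℂ (j : ℕ))]
    rw [Matrix.det_vandermonde, Pn]
    push_cast
    refine Finset.prod_congr rfl fun i _ => ?_
    refine Finset.prod_congr rfl fun j hj => ?_
    have hij : (i : ℕ) < (j : ℕ) := Fin.lt_iff_val_lt_val.mp (Finset.mem_Ioi.mp hj)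
    rw [Nat.cast_sub hij.le]
    ring
  have hne : ((∏ i ∈ Finset.range N, (2 * i + 1).factorial : ℕ) : ℂ) ≠ 0 :=
    Nat.cast_ne_zero.mpr (Finset.prod_ne_zero_iff.mpr fun i _ => (Nat.factorial_pos _).ne')
  have hprod : (∏ i : Fin N, (((2 * (i : ℕ) + 1).factorial : ℂ))⁻¹)
      = (((∏ i ∈ Finset.range N, (2 * i + 1).factorial : ℕ)) : ℂ)⁻¹ := by
    rw [Finset.prod_inv_distrib]
    congr 1
    rw [← Fin.prod_univ_eq_prod_range (fun i => ((2 * i + 1).factorial : ℕ)) N]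
    push_cast
    rfl
  rw [hW, hV, hprod]
  have key : ((cN N : ℂ)) * (((Pn N : ℕ)) : ℂ)
      = (((∏ i ∈ Finset.range N, (2 * i + 1).factorial : ℕ)) : ℂ) := by
    rw [← Nat.cast_mul, cN_mul_Pn]
  rw [show (cN N : ℂ) * ((((∏ i ∈ Finset.range N, (2 * i + 1).factorial : ℕ)) : ℂ)⁻¹
      * (((Pn N : ℕ)) : ℂ)) = ((cN N : ℂ) * (((Pn N : ℕ)) : ℂ))
      * (((∏ i ∈ Finset.range N, (2 * i + 1).factorial : ℕ)) : ℂ)⁻¹ from by ring,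
    key, mul_inv_cancel₀ hne]

end Det2

theorem stmt6 (N : ℕ) (κ : ℕ → ℂ) :
    (adlerMoser κ N).Monic ∧ (adlerMoser κ N).natDegree = N * (N + 1) / 2 := by
  have hM : adlerMoser κ N = (cN N : Polynomial ℂ) * (Mmat κ N).det := rfl
  have h1 : (adlerMoser κ N).coeff (N * (N + 1) / 2) = 1 := by
    rw [hM, ← Polynomial.C_eq_natCast, Polynomial.coeff_C_mul, detM_coeff, detL]
  have h2 : (adlerMoser κ N).natDegree ≤ N * (N + 1) / 2 := by
    rw [hM, ← Polynomial.C_eq_natCast]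
    refine le_trans (Polynomial.natDegree_C_mul_le _ _) (detM_natDegree_le κ N)
  refine ⟨Polynomial.monic_of_natDegree_le_of_coeff_eq_one _ h2 h1, le_antisymm h2 ?_⟩
  exact Polynomial.le_natDegree_of_ne_zero (by rw [h1]; exact one_ne_zero)
end

section
/- The N×N Wronskian-type determinant det_{1≤i,j≤N}(q_{2i-j}(z)), where q_m(z) = z^m/m! for m ≥ 0 and q_m ≡ 0 for m < 0, equals c_N^{-1} z^{N(N+1)/2} with c_N = ∏_{j=1}^N (2j-1)!!. -/
open Finset Polynomial

lemma prod_diff (N : ℕ) :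
    (∏ i : Fin N, ∏ j ∈ Ioi i, ((j : ℂ) - (i : ℂ))) = ∏ i ∈ range N, (i.factorial : ℂ) := by
  cases N with
  | zero => simp
  | succ n =>
    have h := Matrix.det_vandermonde_id_eq_superFactorial (R := ℂ) n
    rw [Matrix.det_vandermonde] at h
    rw [h]
    rw [← Nat.prod_range_succ_factorial n]
    push_cast
    rfl

lemma prod_two (N : ℕ) :
    (∏ i : Fin N, ∏ _j ∈ Ioi i, (2 : ℂ)) = 2 ^ (N * (N - 1) / 2) := by
  simp only [prod_const, Fin.card_Ioi, ← pow_mul]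
  rw [Finset.prod_pow_eq_pow_sum]
  congr 1
  rw [Fin.sum_univ_eq_sum_range (fun i => N - 1 - i)]
  rw [← Finset.sum_range_id N, ← Finset.sum_range_reflect (fun i => i) N]

lemma detB (N : ℕ) :
    (Matrix.of fun i j : Fin N =>
      if (j : ℕ) ≤ 2 * (i : ℕ) + 1 then (((2 * (i : ℕ) + 1 - (j : ℕ)).factorial : ℂ))⁻¹
      else 0).det = ((cN N : ℂ))⁻¹ := by
  have hB : (Matrix.of fun i j : Fin N =>
      if (j : ℕ) ≤ 2 * (i : ℕ) + 1 then (((2 * (i : ℕ) + 1 - (j : ℕ)).factorial : ℂ))⁻¹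
      else 0) =
      Matrix.diagonal (fun i : Fin N => (((2 * (i : ℕ) + 1).factorial : ℂ))⁻¹) *
        Matrix.of (fun i j : Fin N =>
          (descPochhammer ℂ (j : ℕ)).eval (((2 * (i : ℕ) + 1 : ℕ) : ℂ))) := by
    ext i j
    rw [Matrix.diagonal_mul, Matrix.of_apply, Matrix.of_apply,
      descPochhammer_eval_eq_descFactorial]
    by_cases h : (j : ℕ) ≤ 2 * (i : ℕ) + 1
    · rw [if_pos h]
      have hd := Nat.factorial_mul_descFactorial h
      have : (((2 * (i : ℕ) + 1 - (j : ℕ)).factorial : ℂ)) *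
          ((2 * (i : ℕ) + 1).descFactorial (j : ℕ) : ℂ) =
          ((2 * (i : ℕ) + 1).factorial : ℂ) := by exact_mod_cast hd
      have h1 : (((2 * (i : ℕ) + 1).factorial : ℂ)) ≠ 0 :=
        Nat.cast_ne_zero.mpr (Nat.factorial_pos _).ne'
      have h2 : (((2 * (i : ℕ) + 1 - (j : ℕ)).factorial : ℂ)) ≠ 0 :=
        Nat.cast_ne_zero.mpr (Nat.factorial_pos _).ne'
      field_simp
      linear_combination -this
    · rw [if_neg h, Nat.descFactorial_eq_zero_iff_lt.mpr (by omega), Nat.cast_zero, mul_zero]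
  rw [hB, Matrix.det_mul, Matrix.det_diagonal,
    ← Matrix.det_eval_matrixOfPolynomials_eq_det_vandermonde
      (fun i : Fin N => (((2 * (i : ℕ) + 1 : ℕ) : ℂ)))
      (fun j : Fin N => descPochhammer ℂ (j : ℕ))
      (fun i => descPochhammer_natDegree ℂ _) (fun i => monic_descPochhammer ℂ _),
    Matrix.det_vandermonde]
  have hsplit : (∏ i : Fin N, ∏ j ∈ Ioi i,
      ((((2 * (j : ℕ) + 1 : ℕ) : ℂ)) - (((2 * (i : ℕ) + 1 : ℕ) : ℂ)))) =
      (∏ i : Fin N, ∏ _j ∈ Ioi i, (2 : ℂ)) * ∏ i : Fin N, ∏ j ∈ Ioi i, ((j : ℂ) - (i : ℂ)) := by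
    rw [← Finset.prod_mul_distrib]
    refine Finset.prod_congr rfl fun i _ => ?_
    rw [← Finset.prod_mul_distrib]
    refine Finset.prod_congr rfl fun j _ => ?_
    push_cast
    ring
  rw [hsplit, prod_diff, prod_two]
  rw [Fin.prod_univ_eq_prod_range (fun i => (((2 * i + 1).factorial : ℂ))⁻¹)]
  rw [show ((2:ℂ)) ^ (N * (N - 1) / 2) = ∏ i ∈ range N, (2:ℂ) ^ i by
    rw [Finset.prod_pow_eq_pow_sum, Finset.sum_range_id]]
  rw [cN, Nat.cast_prod, ← Finset.prod_inv_distrib, ← Finset.prod_mul_distrib,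
    ← Finset.prod_mul_distrib]
  refine Finset.prod_congr rfl fun i _ => ?_
  have h1 : (2 * i + 1).factorial = (2*i+1).doubleFactorial * (2 ^ i * i.factorial) := by
    rw [Nat.factorial_eq_mul_doubleFactorial (2*i), Nat.doubleFactorial_two_mul]
  have h2 : ((2 * i + 1).factorial : ℂ) = ((2*i+1).doubleFactorial : ℂ) * (2 ^ i * i.factorial) := by
    exact_mod_cast h1
  rw [h2]
  have hne1 : ((2*i+1).doubleFactorial : ℂ) ≠ 0 := Nat.cast_ne_zero.mpr (Nat.doubleFactorial_pos _).ne'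
  have hne2 : ((2:ℂ) ^ i * (i.factorial:ℂ)) ≠ 0 :=
    mul_ne_zero (pow_ne_zero _ two_ne_zero) (Nat.cast_ne_zero.mpr (Nat.factorial_pos _).ne')
  field_simp
  ring_nf
  exact mul_inv_cancel₀ (Nat.cast_ne_zero.mpr (Nat.factorial_pos _).ne')

lemma sum_odd (N : ℕ) : ∑ i ∈ range N, (2 * i + 1) = N * N := by
  induction N with
  | zero => rfl
  | succ n ih => rw [Finset.sum_range_succ, ih]; ring

theorem stmt7 (N : ℕ) :
    Matrix.det (Matrix.of fun i j : Fin N =>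
        if (j : ℕ) ≤ 2 * (i : ℕ) + 1 then
          Polynomial.C (((2 * (i : ℕ) + 1 - (j : ℕ)).factorial : ℂ))⁻¹ *
            Polynomial.X ^ (2 * (i : ℕ) + 1 - (j : ℕ))
        else 0) =
      Polynomial.C ((cN N : ℂ))⁻¹ * Polynomial.X ^ (N * (N + 1) / 2) := by
  set B : Matrix (Fin N) (Fin N) ℂ := Matrix.of fun i j : Fin N =>
      if (j : ℕ) ≤ 2 * (i : ℕ) + 1 then (((2 * (i : ℕ) + 1 - (j : ℕ)).factorial : ℂ))⁻¹
      else 0 with hBdef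
  set M : Matrix (Fin N) (Fin N) (Polynomial ℂ) := Matrix.of fun i j : Fin N =>
      if (j : ℕ) ≤ 2 * (i : ℕ) + 1 then
        Polynomial.C (((2 * (i : ℕ) + 1 - (j : ℕ)).factorial : ℂ))⁻¹ *
          Polynomial.X ^ (2 * (i : ℕ) + 1 - (j : ℕ))
      else 0 with hMdef
  have hmat : M * Matrix.diagonal (fun j : Fin N => (X : Polynomial ℂ) ^ (j : ℕ)) =
      Matrix.diagonal (fun i : Fin N => (X : Polynomial ℂ) ^ (2 * (i : ℕ) + 1)) *
        B.map Polynomial.C := by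
    ext i j
    rw [Matrix.mul_diagonal, Matrix.diagonal_mul, Matrix.map_apply, hMdef, hBdef,
      Matrix.of_apply, Matrix.of_apply]
    by_cases h : (j : ℕ) ≤ 2 * (i : ℕ) + 1
    · rw [if_pos h, if_pos h, mul_assoc, ← pow_add,
        show 2 * (i : ℕ) + 1 - (j : ℕ) + (j : ℕ) = 2 * (i : ℕ) + 1 from by omega]
      ring
    · rw [if_neg h, if_neg h, zero_mul, map_zero, mul_zero]
  have hdet := congrArg Matrix.det hmat
  have hdetmap : (B.map ⇑(Polynomial.C : ℂ →+* Polynomial ℂ)).det = Polynomial.C B.det := by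
    rw [← RingHom.mapMatrix_apply, ← RingHom.map_det]
  rw [Matrix.det_mul, Matrix.det_mul, Matrix.det_diagonal, Matrix.det_diagonal,
    hdetmap, show B.det = ((cN N : ℂ))⁻¹ from detB N] at hdet
  have hp1 : (∏ j : Fin N, (X : Polynomial ℂ) ^ (j : ℕ)) = X ^ (N * (N - 1) / 2) := by
    rw [Finset.prod_pow_eq_pow_sum, Fin.sum_univ_eq_sum_range (fun i => i), Finset.sum_range_id]
  have hp2 : (∏ i : Fin N, (X : Polynomial ℂ) ^ (2 * (i : ℕ) + 1)) = X ^ (N * N) := by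
    rw [Finset.prod_pow_eq_pow_sum, Fin.sum_univ_eq_sum_range (fun i => 2 * i + 1), sum_odd]
  rw [hp1, hp2] at hdet
  apply mul_right_cancel₀ (pow_ne_zero (N * (N - 1) / 2) (Polynomial.X_ne_zero (R := ℂ)))
  rw [hdet, mul_assoc, ← pow_add,
    show N * (N + 1) / 2 + N * (N - 1) / 2 = N * N from by
      cases N with
      | zero => rfl
      | succ m =>
        obtain ⟨a, ha⟩ := Nat.even_mul_succ_self m
        have e1 : (m+1) * (m+1+1) = m*(m+1) + 2*(m+1) := by ring
        have e2 : (m+1) * (m+1-1) = m*(m+1) := by rw [Nat.add_sub_cancel, mul_comm]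
        have e3 : (m+1) * (m+1) = m*(m+1) + (m+1) := by ring
        omega, mul_comm]
end

section
/- Let H be the N×2N matrix with entries H_{i,j} = h_{2i-j} (with h_0 = 1, h_m = 0 for m < 0). If the vector relation H_1 = ∑_{j=1}^N α_j H_{2j} holds for the columns of H, where α_1, ..., α_N are determined by the lower triangular system relating (h_1, h_3, ..., h_{2N-1}) to (1, h_2, ..., h_{2N-2}), then also H_{2m+1} = ∑_{j=1}^{N-m} α_j H_{2j+2m} for every 1 ≤ m ≤ N-1, where H_j denotes the j-th column of H. -/
theorem stmt16 (N : ℕ) (h : ℕ → ℂ) (hz : ℤ → ℂ) (α : ℕ → ℂ)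
    (hzneg : ∀ m : ℤ, m < 0 → hz m = 0) (hznat : ∀ m : ℕ, hz (m : ℤ) = h m) (h0 : h 0 = 1)
    -- the constants α_j are determined by the lower triangular system
    -- h_{2i-1} = ∑_{j=1}^{i} α_j h_{2(i-j)}, 1 ≤ i ≤ N
    (hα : ∀ i ∈ Finset.Icc 1 N, h (2 * i - 1) = ∑ j ∈ Finset.Icc 1 i, α j * h (2 * (i - j)))
    -- H has (1-based) entries H_{i,j} = h_{2i-j} (zero for negative index)
    (H : ℕ → ℕ → ℂ) (hH : ∀ i j : ℕ, H i j = hz (2 * (i : ℤ) - (j : ℤ)))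
    -- the vector relation H_1 = ∑_{j=1}^N α_j H_{2j} for the columns of H
    (hcol1 : ∀ i ∈ Finset.Icc 1 N, H i 1 = ∑ j ∈ Finset.Icc 1 N, α j * H i (2 * j)) :
    -- then H_{2m+1} = ∑_{j=1}^{N-m} α_j H_{2j+2m} for every 1 ≤ m ≤ N-1
    ∀ m : ℕ, 1 ≤ m → m ≤ N - 1 → ∀ i ∈ Finset.Icc 1 N,
      H i (2 * m + 1) = ∑ j ∈ Finset.Icc 1 (N - m), α j * H i (2 * j + 2 * m) := by
  intro m hm1 hm2 i hi
  simp only [Finset.mem_Icc] at hi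
  obtain ⟨hi1, hi2⟩ := hi
  by_cases him : i ≤ m
  · rw [hH, hzneg _ (by push_cast; omega)]
    symm
    apply Finset.sum_eq_zero
    intro j hj
    simp only [Finset.mem_Icc] at hj
    rw [hH, hzneg _ (by push_cast; omega), mul_zero]
  · push_neg at him
    set k := i - m with hk
    have hk1 : 1 ≤ k := by omega
    have hkN : k ≤ N - m := by omega
    have lhs : H i (2 * m + 1) = h (2 * k - 1) := by
      rw [hH, ← hznat (2 * k - 1)]
      congr 1
      have : (1:ℕ) ≤ 2 * k := by omega
      push_cast [Nat.cast_sub this]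
      omega
    have hsub : Finset.Icc 1 k ⊆ Finset.Icc 1 (N - m) :=
      Finset.Icc_subset_Icc_right hkN
    have hzero : ∀ j ∈ Finset.Icc 1 (N - m), j ∉ Finset.Icc 1 k →
        α j * H i (2 * j + 2 * m) = 0 := by
      intro j hj hj'
      simp only [Finset.mem_Icc] at hj hj'
      rw [hH, hzneg _ (by push_cast; omega), mul_zero]
    rw [lhs, hα k (Finset.mem_Icc.mpr ⟨hk1, by omega⟩),
      ← Finset.sum_subset hsub hzero]
    apply Finset.sum_congr rfl
    intro j hj
    simp only [Finset.mem_Icc] at hj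
    rw [hH, ← hznat (2 * (k - j))]
    congr 2
    push_cast [Nat.cast_sub hj.2]
    omega
end
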